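/- For every complex manifold X, the Hodge filtered complex bordism groups sit in a long exact sequence … → MU^{n−1}(X) ⊗ C → MU^n_D(p)(X) → MU^n(X) ⊕ H^n(X; Ω^{*≥p}(π_{2*}MU ⊗ C)) → MU^n(X) ⊗ C → …, using the isomorphism MU^n(X) ⊗ C ≅ ⊕_j H^{n+2j}(X; π_{2j}MU ⊗ C). -/

import Mathlib

/-!
The homotopy pullback defining `MU_D(p)` is a distinguished triangle
`MU_D(p) → MU ⊕ F^pΩ → Ω → MU_D(p)[1]`. The functor `[Σ^∞₊X, -]` is homological, so it
turns the shifts of this triangle into a long exact sequence of groups; splitting maps into the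
biproduct as pairs and replacing `[Σ^∞₊X, Ω[n]]` by `MU^n(X) ⊗ ℂ` along `e` gives the
sequence of the theorem.
-/

open CategoryTheory Limits Pretriangulated

namespace Function.Exact

variable {M M' N N' P : Type*} {f : M → N} {g : N → P}

lemma comp_surjective [Zero P] (h : Exact f g) {e : M' → M} (he : Surjective e) :
    Exact (f ∘ e) g := by
  intro y
  rw [he.range_comp]
  exact h y

lemma conj_equiv [Zero P] (h : Exact f g) (e : N ≃ N') : Exact (e ∘ f) (g ∘ e.symm) := by
  intro y
  rw [Function.comp_apply, h (e.symm y)]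
  exact ⟨fun ⟨x, hx⟩ => ⟨x, by simp [hx]⟩, fun ⟨x, hx⟩ => ⟨x, by simp [← hx]⟩⟩

end Function.Exact

namespace CategoryTheory

namespace Functor

variable {C D : Type*} [Category C] [Category D] [Preadditive C] [Preadditive D]
  (F : C ⥤ D) [F.Additive] (X : D) (A B : C) [HasBinaryBiproduct A B]

@[simps]
noncomputable def homObjBiprodAddEquiv :
    (X ⟶ F.obj (A ⊞ B)) ≃+ (X ⟶ F.obj A) × (X ⟶ F.obj B) where
  toFun ψ := (ψ ≫ F.map biprod.fst, ψ ≫ F.map biprod.snd)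
  invFun x := x.1 ≫ F.map biprod.inl + x.2 ≫ F.map biprod.inr
  left_inv ψ := by
    simp only [Category.assoc, ← F.map_comp, ← Preadditive.comp_add, ← F.map_add, biprod.total,
      F.map_id, Category.comp_id]
  right_inv x := by simp [← F.map_comp]
  map_add' _ _ := by simp

variable {F X A B}

lemma homObjBiprodAddEquiv_apply_comp_map_lift {Y : C} (f : Y ⟶ A) (g : Y ⟶ B)
    (ψ : X ⟶ F.obj Y) :
    F.homObjBiprodAddEquiv X A B (ψ ≫ F.map (biprod.lift f g)) = (ψ ≫ F.map f, ψ ≫ F.map g) := by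
  simp [← F.map_comp]

lemma homObjBiprodAddEquiv_symm_apply_comp_map_desc {Y : C} (f : A ⟶ Y) (g : B ⟶ Y)
    (x : (X ⟶ F.obj A) × (X ⟶ F.obj B)) :
    (F.homObjBiprodAddEquiv X A B).symm x ≫ F.map (biprod.desc f g) =
      x.1 ≫ F.map f + x.2 ≫ F.map g := by
  simp [← F.map_comp]

end Functor

namespace Pretriangulated

section

variable {C : Type*} [Category* C] [HasShift C ℤ]

noncomputable def shiftedMor₃ (T : Triangle C) (n₀ n₁ : ℤ) (h : n₀ + 1 = n₁) :
    T.obj₃⟦n₀⟧ ⟶ T.obj₁⟦n₁⟧ :=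
  T.mor₃⟦n₀⟧' ≫ (shiftFunctorAdd' C 1 n₀ n₁ (by lia)).inv.app _

lemma coe_preadditiveCoyoneda_homologySequenceδ [Preadditive C] (T : Triangle C) (X : C)
    (n₀ n₁ : ℤ) (h : n₀ + 1 = n₁) :
    ⇑((preadditiveCoyoneda.obj (Opposite.op X)).homologySequenceδ T n₀ n₁ h).hom =
      fun g => g ≫ shiftedMor₃ T n₀ n₁ h :=
  funext (preadditiveCoyoneda_homologySequenceδ_apply T n₀ n₁ h)

end

variable {C : Type*} [Category* C] [Preadditive C] [HasZeroObject C] [HasShift C ℤ]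
  [∀ n : ℤ, (shiftFunctor C n).Additive] [Pretriangulated C]
  {T : Triangle C} (hT : T ∈ distTriang C) (X : C)
include hT

lemma coyoneda_shift_exact₂ (n : ℤ) :
    Function.Exact (fun f : X ⟶ T.obj₁⟦n⟧ => f ≫ T.mor₁⟦n⟧') (fun g => g ≫ T.mor₂⟦n⟧') :=
  (ShortComplex.ab_exact_iff_function_exact _).1
    ((preadditiveCoyoneda.obj (Opposite.op X)).homologySequence_exact₂ T hT n)

lemma coyoneda_shift_exact₃ (n₀ n₁ : ℤ) (h : n₀ + 1 = n₁) :
    Function.Exact (fun f : X ⟶ T.obj₂⟦n₀⟧ => f ≫ T.mor₂⟦n₀⟧')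
      (fun g => g ≫ shiftedMor₃ T n₀ n₁ h) := by
  have := (ShortComplex.ab_exact_iff_function_exact _).1
    ((preadditiveCoyoneda.obj (Opposite.op X)).homologySequence_exact₃ T hT n₀ n₁ h)
  dsimp only at this
  rwa [coe_preadditiveCoyoneda_homologySequenceδ] at this

lemma coyoneda_shift_exact₁ (n₀ n₁ : ℤ) (h : n₀ + 1 = n₁) :
    Function.Exact (fun f : X ⟶ T.obj₃⟦n₀⟧ => f ≫ shiftedMor₃ T n₀ n₁ h)
      (fun g => g ≫ T.mor₁⟦n₁⟧') := by
  have := (ShortComplex.ab_exact_iff_function_exact _).1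
    ((preadditiveCoyoneda.obj (Opposite.op X)).homologySequence_exact₁ T hT n₀ n₁ h)
  dsimp only at this
  rwa [coe_preadditiveCoyoneda_homologySequenceδ] at this

end Pretriangulated

end CategoryTheory

theorem hodge_filtered_stmt_13
    -- the stable homotopy category of presheaves of symmetric spectra on Man_ℂ
    (S : Type 1) [Category S] [Preadditive S] [HasZeroObject S] [HasShift S ℤ]
    [∀ n : ℤ, (shiftFunctor S n).Additive] [Pretriangulated S] [HasBinaryBiproducts S]
    -- Σ^∞₊X; the Thom spectrum MU; the Eilenberg–MacLane spectra of the (filtered)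
    -- holomorphic de Rham complexes with coefficients in π_{2*}MU ⊗ ℂ
    (SigX MUo FpOm Om : S)
    (τ : MUo ⟶ Om) (ι : FpOm ⟶ Om)
    -- MU_D(p), the homotopy pullback, encoded as a distinguished triangle
    (MUD : S) (pr1 : MUD ⟶ MUo) (pr2 : MUD ⟶ FpOm)
    (hpullback : ∃ w : Om ⟶ MUD⟦(1 : ℤ)⟧,
      Triangle.mk (biprod.lift pr1 pr2) (biprod.desc τ (-ι)) w ∈ distTriang S)
    -- the isomorphism MU^n(X) ⊗ ℂ ≅ ⊕_j H^{n+2j}(X; π_{2j}MU ⊗ ℂ)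
    (e : ∀ n : ℤ, TensorProduct ℤ ℂ (SigX ⟶ MUo⟦n⟧) ≃+ (SigX ⟶ Om⟦n⟧)) :
    -- the long exact sequence of Hodge filtered complex bordism groups
    ∃ δ : ∀ n : ℤ, TensorProduct ℤ ℂ (SigX ⟶ MUo⟦n⟧) →+ (SigX ⟶ MUD⟦n + 1⟧),
      ∀ n : ℤ,
        -- exactness at MU^{n+1}_D(p)(X)
        Function.Exact (δ n)
          (fun ψ : SigX ⟶ MUD⟦n + 1⟧ =>
            (ψ ≫ (shiftFunctor S (n + 1)).map pr1,
             ψ ≫ (shiftFunctor S (n + 1)).map pr2)) ∧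
        -- exactness at MU^n(X) ⊕ H^n(X; Ω^{*≥p}(π_{2*}MU ⊗ ℂ))
        Function.Exact
          (fun ψ : SigX ⟶ MUD⟦n⟧ =>
            (ψ ≫ (shiftFunctor S n).map pr1, ψ ≫ (shiftFunctor S n).map pr2))
          (fun x : (SigX ⟶ MUo⟦n⟧) × (SigX ⟶ FpOm⟦n⟧) =>
            (e n).symm (x.1 ≫ (shiftFunctor S n).map τ - x.2 ≫ (shiftFunctor S n).map ι)) ∧
        -- exactness at MU^n(X) ⊗ ℂ
        Function.Exact
          (fun x : (SigX ⟶ MUo⟦n⟧) × (SigX ⟶ FpOm⟦n⟧) =>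
            (e n).symm (x.1 ≫ (shiftFunctor S n).map τ - x.2 ≫ (shiftFunctor S n).map ι))
          (δ n) := by
  obtain ⟨w, hT⟩ := hpullback
  set T := Triangle.mk (biprod.lift pr1 pr2) (biprod.desc τ (-ι)) w
  let P (m : ℤ) := (shiftFunctor S m).homObjBiprodAddEquiv SigX MUo FpOm
  have hpr (m : ℤ) : (fun ψ : SigX ⟶ MUD⟦m⟧ => (ψ ≫ pr1⟦m⟧', ψ ≫ pr2⟦m⟧')) =
      P m ∘ fun ψ => ψ ≫ (biprod.lift pr1 pr2)⟦m⟧' :=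
    funext fun ψ => (Functor.homObjBiprodAddEquiv_apply_comp_map_lift pr1 pr2 ψ).symm
  have hdiff (m : ℤ) : (fun x : (SigX ⟶ MUo⟦m⟧) × (SigX ⟶ FpOm⟦m⟧) =>
      (e m).symm (x.1 ≫ τ⟦m⟧' - x.2 ≫ ι⟦m⟧')) =
      (e m).symm ∘ (fun g => g ≫ (biprod.desc τ (-ι))⟦m⟧') ∘ (P m).symm := by
    funext x
    simp only [Function.comp_apply, P, Functor.homObjBiprodAddEquiv_symm_apply_comp_map_desc,
      Functor.map_neg, Preadditive.comp_neg, sub_eq_add_neg]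
  refine ⟨fun n => (Preadditive.rightComp SigX (shiftedMor₃ T n (n + 1) rfl)).comp
    (e n).toAddMonoidHom, fun n => ?_⟩
  rw [hpr, hpr, hdiff]
  refine ⟨?_, ?_, ?_⟩
  · exact ((coyoneda_shift_exact₁ hT SigX n (n + 1) rfl).comp_surjective
      (e n).surjective).comp_injective _ (P _).injective (map_zero _)
  · exact ((coyoneda_shift_exact₂ hT SigX n).conj_equiv (P n).toEquiv).comp_injective _
      (e n).symm.injective (map_zero _)
  · exact ((coyoneda_shift_exact₃ hT SigX n (n + 1) rfl).conj_equiv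
      (e n).symm.toEquiv).comp_surjective (P n).symm.surjective
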